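/- arXiv:2410.01924 — 5 statements merged into one kernel-verified Lean document; each statement's English description precedes it below -/
import Mathlib

section
/- Let α be a positive integer and let γ : I → ℝ² be a C², unit-speed (|γ'| = 1) curve defined on an interval I ⊆ ℝ whose total curvature satisfies ∫_I |γ''(s)| ds ≤ απ. Then for every x₀ ∈ ℝ² and every λ > 0, the Gaussian weighted length satisfies (4πλ)^{-1/2} ∫_I exp(-|γ(s)-x₀|²/(4λ)) ds ≤ 4α√2; in particular the entropy of γ is at most 4α√2. -/
/-!
Cut `I` into `4α` pieces of total curvature at most `π/4` each (level sets of the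
cumulative curvature). On a piece the unit tangent turns by the integral of the signed
curvature, so it stays within angle `π/4` of its value `e` at a base point, and
`s ↦ ⟪γ s - x₀, e⟫` has speed at least `cos (π/4) = 1/√2`. As `|⟪γ s - x₀, e⟫| ≤ ‖γ s - x₀‖`,
changing variables to `v = ⟪γ s - x₀, e⟫` bounds the Gaussian weighted length of the piece
by `√2` times that of a straight line, which is `1`.
-/

open Real MeasureTheory Set Filter
open scoped RealInnerProductSpace ENNReal

noncomputable section

/-- The Euclidean plane. -/
abbrev R2 := EuclideanSpace ℝ (Fin 2)

/-- The point of `ℝ²` with coordinates `(x, y)`. -/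
def toR2 (x y : ℝ) : R2 := (WithLp.equiv 2 (Fin 2 → ℝ)).symm ![x, y]

/-- Counterclockwise rotation of the plane by `π/2`. -/
def Jrot (v : R2) : R2 := toR2 (-(v 1)) (v 0)

namespace R2

lemma inner_eq (v w : R2) : ⟪v, w⟫ = v 0 * w 0 + v 1 * w 1 := by
  simp [PiLp.inner_apply, Fin.sum_univ_two, mul_comm]

lemma norm_sq_eq (v : R2) : ‖v‖ ^ 2 = v 0 ^ 2 + v 1 ^ 2 := by
  rw [← real_inner_self_eq_norm_sq, inner_eq]; ring

end R2

@[simp] lemma Jrot_apply_zero (v : R2) : Jrot v 0 = -v 1 := rfl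

@[simp] lemma Jrot_apply_one (v : R2) : Jrot v 1 = v 0 := rfl

lemma Jrot_add_smul (a b : ℝ) (v w : R2) : Jrot (a • v + b • w) = a • Jrot v + b • Jrot w := by
  ext i; fin_cases i <;> simp [add_comm]

lemma Jrot_sub (v w : R2) : Jrot (v - w) = Jrot v - Jrot w := by
  ext i; fin_cases i <;> simp [neg_add_eq_sub]

@[simp] lemma Jrot_Jrot (v : R2) : Jrot (Jrot v) = -v := by
  ext i; fin_cases i <;> simp

lemma inner_Jrot_left (v w : R2) : ⟪Jrot v, w⟫ = -⟪v, Jrot w⟫ := by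
  simp only [R2.inner_eq, Jrot_apply_zero, Jrot_apply_one]; ring

@[simp] lemma inner_Jrot_self (v : R2) : ⟪Jrot v, v⟫ = 0 := by
  simp only [R2.inner_eq, Jrot_apply_zero, Jrot_apply_one]; ring

@[simp] lemma inner_Jrot_Jrot (v w : R2) : ⟪Jrot v, Jrot w⟫ = ⟪v, w⟫ := by
  simp only [R2.inner_eq, Jrot_apply_zero, Jrot_apply_one]; ring

@[simp] lemma norm_Jrot (v : R2) : ‖Jrot v‖ = ‖v‖ := by
  rw [norm_eq_sqrt_real_inner, inner_Jrot_Jrot, ← norm_eq_sqrt_real_inner]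

lemma continuous_Jrot : Continuous Jrot :=
  (Isometry.of_dist_eq fun v w => by
    rw [dist_eq_norm, dist_eq_norm, ← Jrot_sub, norm_Jrot]).continuous

lemma eq_inner_Jrot_smul_Jrot_of_inner_eq_zero {v w : R2} (hw : ‖w‖ = 1) (hvw : ⟪v, w⟫ = 0) :
    v = ⟪v, Jrot w⟫ • Jrot w := by
  have hw' : w 0 ^ 2 + w 1 ^ 2 = 1 := by rw [← R2.norm_sq_eq, hw, one_pow]
  rw [R2.inner_eq] at hvw
  ext i; fin_cases i <;> simp only [Fin.zero_eta, Fin.mk_one, Fin.isValue, PiLp.smul_apply,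
    smul_eq_mul, R2.inner_eq, Jrot_apply_zero, Jrot_apply_one]
  · linear_combination (-(v 0)) * hw' + w 0 * hvw
  · linear_combination (-(v 1)) * hw' + w 1 * hvw

def rotateBy (θ : ℝ) (e : R2) : R2 := cos θ • e + sin θ • Jrot e

@[simp] lemma rotateBy_zero (e : R2) : rotateBy 0 e = e := by simp [rotateBy]

lemma hasDerivAt_rotateBy (e : R2) (θ : ℝ) :
    HasDerivAt (fun θ => rotateBy θ e) (Jrot (rotateBy θ e)) θ := by
  have h := ((hasDerivAt_cos θ).smul_const e).add ((hasDerivAt_sin θ).smul_const (Jrot e))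
  refine h.congr_deriv ?_
  simp only [rotateBy, Jrot_add_smul, Jrot_Jrot]
  module

lemma inner_rotateBy_self {e : R2} (he : ‖e‖ = 1) (θ : ℝ) : ⟪rotateBy θ e, e⟫ = cos θ := by
  simp [rotateBy, inner_add_left, real_inner_smul_left, he]

lemma norm_rotateBy {e : R2} (he : ‖e‖ = 1) (θ : ℝ) : ‖rotateBy θ e‖ = 1 := by
  have h : ⟪rotateBy θ e, rotateBy θ e⟫ = 1 := by
    simp only [rotateBy, inner_add_left, inner_add_right, real_inner_smul_left,
      real_inner_smul_right, inner_Jrot_Jrot, real_inner_comm (Jrot e) e, inner_Jrot_self,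
      inner_self_eq_one_of_norm_eq_one he]
    linear_combination sin_sq_add_cos_sq θ
  rw [norm_eq_sqrt_real_inner, h, sqrt_one]

lemma inner_eq_zero_of_hasDerivWithinAt_of_norm_eq {E : Type*} [NormedAddCommGroup E]
    [InnerProductSpace ℝ E] {f : ℝ → E} {f' : E} {s : Set ℝ} {x r : ℝ}
    (hf : HasDerivWithinAt f f' s x) (hs : UniqueDiffWithinAt ℝ s x) (hx : x ∈ s)
    (hnorm : ∀ y ∈ s, ‖f y‖ = r) : ⟪f', f x⟫ = 0 := by
  have hconst : HasDerivWithinAt (fun y => ⟪f y, f y⟫) 0 s x :=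
    (hasDerivWithinAt_const x s (r ^ 2)).congr
      (fun y hy => by rw [real_inner_self_eq_norm_sq, hnorm y hy])
      (by rw [real_inner_self_eq_norm_sq, hnorm x hx])
  have h := (hf.inner ℝ hf).derivWithin hs
  rw [hconst.derivWithin hs, real_inner_comm] at h
  linarith

/-- `⟪A, Jrot T⟫` is the signed curvature of the unit vector field `T` with derivative `A`. -/
theorem inner_eq_cos_integral {T A : ℝ → R2} {a b : ℝ} (hab : a ≤ b)
    (hT : ∀ s ∈ Icc a b, HasDerivWithinAt T (A s) (Icc a b) s) (hA : ContinuousOn A (Icc a b))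
    (hunit : ∀ s ∈ Icc a b, ‖T s‖ = 1) (horth : ∀ s ∈ Icc a b, ⟪A s, T s⟫ = 0) :
    ⟪T b, T a⟫ = cos (∫ r in a..b, ⟪A r, Jrot (T r)⟫) := by
  set κ := fun r => ⟪A r, Jrot (T r)⟫
  set θ := fun x => ∫ r in a..x, κ r
  set V := fun x => rotateBy (θ x) (T a)
  have ha : a ∈ Icc a b := left_mem_Icc.2 hab
  have hb : b ∈ Icc a b := right_mem_Icc.2 hab
  have hκ : ContinuousOn κ (Icc a b) :=
    hA.inner (continuous_Jrot.comp_continuousOn fun s hs => (hT s hs).continuousWithinAt)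
  have hθ : ∀ s ∈ Icc a b, HasDerivWithinAt θ (κ s) (Icc a b) s := fun s hs =>
    haveI : Fact (s ∈ Icc a b) := ⟨hs⟩
    intervalIntegral.integral_hasDerivWithinAt_right
      ((hκ.mono (Icc_subset_Icc_right hs.2)).intervalIntegrable_of_Icc hs.1)
      (hκ.stronglyMeasurableAtFilter_nhdsWithin measurableSet_Icc s) (hκ s hs)
  -- `T` and `V` both turn at the rate `κ`, so `⟪T, V⟫` keeps its initial value `1`.
  have hTV : ∀ s ∈ Icc a b, HasDerivWithinAt (fun x => ⟪T x, V x⟫) 0 (Icc a b) s := by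
    intro s hs
    have hV : HasDerivWithinAt V (κ s • Jrot (V s)) (Icc a b) s :=
      (hasDerivAt_rotateBy (T a) (θ s)).scomp_hasDerivWithinAt s (hθ s hs)
    refine ((hT s hs).inner ℝ hV).congr_deriv ?_
    rw [show A s = κ s • Jrot (T s) from
        eq_inner_Jrot_smul_Jrot_of_inner_eq_zero (hunit s hs) (horth s hs),
      real_inner_smul_right, real_inner_smul_left, inner_Jrot_left]
    ring
  have hVb : ⟪T b, V b⟫ = 1 := by
    have h := (convex_Icc a b).norm_image_sub_le_of_norm_hasDerivWithin_le (C := 0) hTV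
      (fun _ _ => by rw [norm_zero]) ha hb
    rw [zero_mul, norm_le_zero_iff, sub_eq_zero] at h
    simp [h, V, θ, hunit a ha]
  rw [(inner_eq_one_iff_of_norm_eq_one (hunit b hb) (norm_rotateBy (hunit a ha) _)).1 hVb,
    inner_rotateBy_self (hunit a ha)]

theorem cos_integral_norm_le_inner {T A : ℝ → R2} {a b : ℝ} (hab : a ≤ b)
    (hT : ∀ s ∈ Icc a b, HasDerivWithinAt T (A s) (Icc a b) s) (hA : ContinuousOn A (Icc a b))
    (hunit : ∀ s ∈ Icc a b, ‖T s‖ = 1) (horth : ∀ s ∈ Icc a b, ⟪A s, T s⟫ = 0)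
    (hπ : ∫ r in a..b, ‖A r‖ ≤ π) :
    cos (∫ r in a..b, ‖A r‖) ≤ ⟪T b, T a⟫ := by
  rw [inner_eq_cos_integral hab hT hA hunit horth, ← cos_abs (∫ r in a..b, ⟪A r, Jrot (T r)⟫)]
  have hκ : |∫ r in a..b, ⟪A r, Jrot (T r)⟫| ≤ ∫ r in a..b, ‖A r‖ := by
    rw [← Real.norm_eq_abs]
    refine intervalIntegral.norm_integral_le_of_norm_le hab (ae_of_all _ fun s hs => ?_)
      (hA.norm.intervalIntegrable_of_Icc hab)
    simpa [hunit s (Ioc_subset_Icc_self hs)] using abs_real_inner_le_norm (A s) (Jrot (T s))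
  exact cos_le_cos_of_nonneg_of_le_pi (abs_nonneg _) hπ hκ

theorem cos_le_inner_derivWithin {γ : ℝ → R2} {I : Set ℝ} (hI : I.OrdConnected)
    (hIu : UniqueDiffOn ℝ I) (hγ : ContDiffOn ℝ 2 γ I) (hunit : ∀ s ∈ I, ‖derivWithin γ I s‖ = 1)
    {a b : ℝ} (ha : a ∈ I) (hb : b ∈ I) (hab : a ≤ b) {c : ℝ} (hc₀ : 0 ≤ c) (hcπ : c ≤ π)
    (hcurv : ∫⁻ r in Icc a b, (‖derivWithin (derivWithin γ I) I r‖₊ : ℝ≥0∞) ≤ ENNReal.ofReal c) :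
    cos c ≤ ⟪derivWithin γ I b, derivWithin γ I a⟫ := by
  set T := derivWithin γ I
  set A := derivWithin T I
  have hT : ContDiffOn ℝ 1 T I := hγ.derivWithin hIu (by norm_num)
  have hTA : ∀ s ∈ I, HasDerivWithinAt T (A s) I s := fun s hs =>
    (hT.differentiableOn one_ne_zero s hs).hasDerivWithinAt
  have hA : ContinuousOn A I := hT.continuousOn_derivWithin hIu le_rfl
  have hsub : Icc a b ⊆ I := hI.out ha hb
  have hA_int : ∫ r in a..b, ‖A r‖ ≤ c := by
    rw [intervalIntegral.integral_of_le hab, ← integral_Icc_eq_integral_Ioc,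
      ← ENNReal.ofReal_le_ofReal_iff hc₀,
      ofReal_integral_norm_eq_lintegral_enorm ((hA.mono hsub).integrableOn_Icc)]
    simpa only [enorm_eq_nnnorm] using hcurv
  calc cos c ≤ cos (∫ r in a..b, ‖A r‖) :=
        cos_le_cos_of_nonneg_of_le_pi
          (intervalIntegral.integral_nonneg hab fun _ _ => norm_nonneg _) hcπ hA_int
    _ ≤ ⟪T b, T a⟫ :=
        cos_integral_norm_le_inner hab (fun s hs => (hTA s (hsub hs)).mono hsub) (hA.mono hsub)
          (fun s hs => hunit s (hsub hs))
          (fun s hs => inner_eq_zero_of_hasDerivWithinAt_of_norm_eq (hTA s (hsub hs))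
            (hIu s (hsub hs)) (hsub hs) hunit)
          (hA_int.trans hcπ)

lemma lintegral_comp_le_of_le_deriv {J : Set ℝ} (hJ : Convex ℝ J) {u u' : ℝ → ℝ}
    (hu : ∀ s ∈ J, HasDerivWithinAt u (u' s) J s) {δ : ℝ} (hδ : 0 < δ) (hle : ∀ s ∈ J, δ ≤ u' s)
    (g : ℝ → ℝ≥0∞) :
    ∫⁻ s in J, g (u s) ≤ ENNReal.ofReal δ⁻¹ * ∫⁻ v, g v := by
  have hJm : MeasurableSet J := hJ.ordConnected.measurableSet
  have hinj : InjOn u J :=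
    (strictMonoOn_of_hasDerivWithinAt_pos hJ (fun s hs => (hu s hs).continuousWithinAt)
      (fun s hs => (hu s (interior_subset hs)).mono interior_subset)
      (fun s hs => hδ.trans_le (hle s (interior_subset hs)))).injOn
  calc ∫⁻ s in J, g (u s) = ENNReal.ofReal δ⁻¹ * ∫⁻ s in J, ENNReal.ofReal δ * g (u s) := by
        rw [lintegral_const_mul' _ _ ENNReal.ofReal_ne_top, ← mul_assoc,
          ← ENNReal.ofReal_mul (inv_nonneg.2 hδ.le), inv_mul_cancel₀ hδ.ne', ENNReal.ofReal_one,
          one_mul]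
    _ ≤ ENNReal.ofReal δ⁻¹ * ∫⁻ s in J, ENNReal.ofReal |u' s| * g (u s) := by
        gcongr ENNReal.ofReal δ⁻¹ * ?_
        refine setLIntegral_mono' hJm fun s hs => ?_
        gcongr
        exact (hle s hs).trans (le_abs_self _)
    _ = ENNReal.ofReal δ⁻¹ * ∫⁻ v in u '' J, g v := by
        rw [lintegral_image_eq_lintegral_abs_deriv_mul hJm hu hinj]
    _ ≤ ENNReal.ofReal δ⁻¹ * ∫⁻ v, g v := by
        gcongr ENNReal.ofReal δ⁻¹ * ?_
        exact setLIntegral_le_lintegral _ _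

lemma lintegral_exp_neg_sq_div (l : ℝ) (hl : 0 < l) :
    ∫⁻ v : ℝ, ENNReal.ofReal (exp (-v ^ 2 / (4 * l))) = ENNReal.ofReal √(4 * π * l) := by
  have hb : 0 < (4 * l)⁻¹ := by positivity
  simp_rw [neg_div, div_eq_inv_mul, ← neg_mul]
  rw [← ofReal_integral_eq_lintegral_ofReal (integrable_exp_neg_mul_sq hb)
    (Eventually.of_forall fun _ => (exp_pos _).le), integral_gaussian, div_inv_eq_mul]
  ring_nf

theorem lintegral_exp_neg_norm_sub_sq_le {E : Type*} [NormedAddCommGroup E]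
    [InnerProductSpace ℝ E] {γ T : ℝ → E} {J : Set ℝ} (hJ : Convex ℝ J)
    (hγ : ∀ s ∈ J, HasDerivWithinAt γ (T s) J s) {e : E} (he : ‖e‖ = 1) {δ : ℝ} (hδ : 0 < δ)
    (hle : ∀ s ∈ J, δ ≤ ⟪T s, e⟫) (x₀ : E) {l : ℝ} (hl : 0 < l) :
    ∫⁻ s in J, ENNReal.ofReal (exp (-‖γ s - x₀‖ ^ 2 / (4 * l)))
      ≤ ENNReal.ofReal δ⁻¹ * ENNReal.ofReal √(4 * π * l) := by
  have hu : ∀ s ∈ J, HasDerivWithinAt (fun t => ⟪γ t - x₀, e⟫) ⟪T s, e⟫ J s := fun s hs =>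
    (((hγ s hs).sub_const x₀).inner ℝ (hasDerivWithinAt_const s J e)).congr_deriv (by simp)
  calc ∫⁻ s in J, ENNReal.ofReal (exp (-‖γ s - x₀‖ ^ 2 / (4 * l)))
      ≤ ∫⁻ s in J, ENNReal.ofReal (exp (-⟪γ s - x₀, e⟫ ^ 2 / (4 * l))) := by
        refine lintegral_mono fun s => ?_
        gcongr ENNReal.ofReal (exp (-?_ / _))
        rw [sq_le_sq, abs_norm]
        simpa [he] using abs_real_inner_le_norm (γ s - x₀) e
    _ ≤ ENNReal.ofReal δ⁻¹ * ENNReal.ofReal √(4 * π * l) := by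
        rw [← lintegral_exp_neg_sq_div l hl]
        exact lintegral_comp_le_of_le_deriv hJ hu hδ hle
          (fun v => ENNReal.ofReal (exp (-v ^ 2 / (4 * l))))

lemma exists_lt_mul_le_and_le_succ_mul {N : ℕ} (hN : 0 < N) {x c : ℝ≥0∞} (hx : x ≤ N * c) :
    ∃ k < N, k * c ≤ x ∧ x ≤ (k + 1) * c := by
  induction N, hN using Nat.le_induction with
  | base => exact ⟨0, one_pos, by simp, by simpa using hx⟩
  | succ N hN ih =>
    by_cases hxN : x ≤ N * c
    · obtain ⟨k, hk, hkx⟩ := ih hxN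
      exact ⟨k, hk.trans N.lt_succ_self, hkx⟩
    · exact ⟨N, N.lt_succ_self, (not_le.1 hxN).le, by simpa using hx⟩

theorem exists_ordConnected_cover_of_setLIntegral_le {I : Set ℝ} (hI : I.OrdConnected)
    {f : ℝ → ℝ≥0∞} {N : ℕ} (hN : 0 < N) {c : ℝ≥0∞} (hc : c ≠ ⊤)
    (hf : ∫⁻ s in I, f s ≤ N * c) :
    ∃ J : Fin N → Set ℝ, I ⊆ ⋃ k, J k ∧ ∀ k, J k ⊆ I ∧ (J k).OrdConnected ∧
      ∀ a ∈ J k, ∀ b ∈ J k, a ≤ b → ∫⁻ s in Icc a b, f s ≤ c := by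
  set L : ℝ → ℝ≥0∞ := fun s => ∫⁻ r in I ∩ Iic s, f r
  have hL_mono : Monotone L := fun s t hst =>
    lintegral_mono_set (inter_subset_inter_right _ (Iic_subset_Iic.2 hst))
  have hL_le : ∀ s, L s ≤ N * c := fun s => (lintegral_mono_set inter_subset_left).trans hf
  have hL_add : ∀ a ∈ I, ∀ b ∈ I, a ≤ b → L a + ∫⁻ s in Icc a b, f s = L b := by
    intro a ha b hb hab
    rw [show L b = ∫⁻ r in I ∩ Iic b, f r from rfl, ← restrict_Ioc_eq_restrict_Icc,
      ← lintegral_union measurableSet_Ioc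
      ((Iic_disjoint_Ioc le_rfl).mono_left inter_subset_right), ← Iic_union_Ioc_eq_Iic hab,
      inter_union_distrib_left, inter_eq_right.2 (Ioc_subset_Icc_self.trans (hI.out ha hb))]
  refine ⟨fun k => I ∩ L ⁻¹' Icc (k * c) ((k + 1) * c), fun s hs => ?_, fun k =>
    ⟨inter_subset_left, hI.inter (ordConnected_Icc.preimage_mono hL_mono), ?_⟩⟩
  · obtain ⟨k, hk, hkL⟩ := exists_lt_mul_le_and_le_succ_mul hN (hL_le s)
    exact mem_iUnion.2 ⟨⟨k, hk⟩, hs, hkL⟩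
  · rintro a ⟨ha, hka, -⟩ b ⟨hb, -, hkb⟩ hab
    refine ENNReal.le_of_add_le_add_left ((hL_le a).trans_lt ?_).ne ?_
    · exact ENNReal.mul_lt_top (ENNReal.natCast_lt_top N) hc.lt_top
    · calc L a + ∫⁻ s in Icc a b, f s = L b := hL_add a ha b hb hab
        _ ≤ k * c + c := by simpa [add_mul] using hkb
        _ ≤ L a + c := by gcongr

lemma Set.OrdConnected.uniqueDiffOn {I : Set ℝ} (hI : I.OrdConnected) (hnt : I.Nontrivial) :
    UniqueDiffOn ℝ I := by
  obtain ⟨p, hp, q, hq, hpq⟩ := hnt.exists_lt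
  refine uniqueDiffOn_convex hI.convex ⟨(p + q) / 2, interior_mono (hI.out hp hq) ?_⟩
  rw [interior_Icc]
  constructor <;> linarith

theorem lintegral_exp_neg_norm_sub_sq_le_of_curvature_le {γ : ℝ → R2} {I J : Set ℝ}
    (hI : I.OrdConnected) (hIu : UniqueDiffOn ℝ I) (hγ : ContDiffOn ℝ 2 γ I)
    (hunit : ∀ s ∈ I, ‖derivWithin γ I s‖ = 1) (hJI : J ⊆ I) (hJ : J.OrdConnected)
    (hcurv : ∀ a ∈ J, ∀ b ∈ J, a ≤ b →
      ∫⁻ r in Icc a b, (‖derivWithin (derivWithin γ I) I r‖₊ : ℝ≥0∞) ≤ ENNReal.ofReal (π / 4))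
    (x₀ : R2) {l : ℝ} (hl : 0 < l) :
    ∫⁻ s in J, ENNReal.ofReal (exp (-‖γ s - x₀‖ ^ 2 / (4 * l)))
      ≤ ENNReal.ofReal √2 * ENNReal.ofReal √(4 * π * l) := by
  rcases J.eq_empty_or_nonempty with rfl | ⟨t₀, ht₀⟩
  · simp
  have hcos : ∀ s ∈ J, √2 / 2 ≤ ⟪derivWithin γ I s, derivWithin γ I t₀⟫ := by
    intro s hs
    rw [← cos_pi_div_four]
    have hπ : π / 4 ≤ π := by linarith [pi_pos]
    rcases le_total t₀ s with h | h
    · exact cos_le_inner_derivWithin hI hIu hγ hunit (hJI ht₀) (hJI hs) h (by positivity) hπ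
        (hcurv t₀ ht₀ s hs h)
    · rw [real_inner_comm]
      exact cos_le_inner_derivWithin hI hIu hγ hunit (hJI hs) (hJI ht₀) h (by positivity) hπ
        (hcurv s hs t₀ ht₀ h)
  have h := lintegral_exp_neg_norm_sub_sq_le hJ.convex
    (fun s hs => ((hγ.differentiableOn two_ne_zero s (hJI hs)).hasDerivWithinAt).mono hJI)
    (hunit t₀ (hJI ht₀)) (by positivity) hcos x₀ hl
  rwa [inv_div, div_sqrt] at h

/-- A `C²` unit-speed planar curve on an interval `I` with total curvature
at most `α·π` (`α` a positive integer) has all Gaussian weighted lengths, hence entropy,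
at most `4α√2`. -/
theorem entropy_le_of_total_curvature_le
    (α : ℕ) (hα : 0 < α) (γ : ℝ → R2) (I : Set ℝ) (hI : OrdConnected I)
    (hγ : ContDiffOn ℝ 2 γ I)
    (hunit : ∀ s ∈ I, ‖derivWithin γ I s‖ = 1)
    (hTC : ∫⁻ s in I, (‖derivWithin (derivWithin γ I) I s‖₊ : ℝ≥0∞)
      ≤ ENNReal.ofReal ((α : ℝ) * π)) :
    ∀ x₀ : R2, ∀ l : ℝ, 0 < l →
      (ENNReal.ofReal (Real.sqrt (4 * π * l)))⁻¹ *
        (∫⁻ s in I, ENNReal.ofReal (Real.exp (-‖γ s - x₀‖ ^ 2 / (4 * l))))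
      ≤ ENNReal.ofReal (4 * (α : ℝ) * Real.sqrt 2) := by
  intro x₀ l hl
  rcases I.subsingleton_or_nontrivial with hsub | hnt
  · simp [Measure.restrict_eq_zero.2 (hsub.measure_zero volume)]
  set C := ENNReal.ofReal √(4 * π * l)
  have hTC' : ∫⁻ s in I, (‖derivWithin (derivWithin γ I) I s‖₊ : ℝ≥0∞)
      ≤ (4 * α : ℕ) * ENNReal.ofReal (π / 4) := by
    rw [← ENNReal.ofReal_natCast, ← ENNReal.ofReal_mul (by positivity)]
    convert hTC using 2
    push_cast
    ring
  obtain ⟨J, hcover, hJ⟩ := exists_ordConnected_cover_of_setLIntegral_le hI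
    (Nat.mul_pos four_pos hα) ENNReal.ofReal_ne_top hTC'
  calc C⁻¹ * ∫⁻ s in I, ENNReal.ofReal (exp (-‖γ s - x₀‖ ^ 2 / (4 * l)))
      ≤ C⁻¹ * ∑ k, ∫⁻ s in J k, ENNReal.ofReal (exp (-‖γ s - x₀‖ ^ 2 / (4 * l))) := by
        gcongr C⁻¹ * ?_
        exact (lintegral_mono_set hcover).trans
          ((lintegral_iUnion_le _ _).trans_eq (tsum_fintype _))
    _ ≤ C⁻¹ * ∑ _k : Fin (4 * α), ENNReal.ofReal √2 * C := by
        gcongr with k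
        exact lintegral_exp_neg_norm_sub_sq_le_of_curvature_le hI (hI.uniqueDiffOn hnt) hγ hunit
          (hJ k).1 (hJ k).2.1 (hJ k).2.2 x₀ hl
    _ = ENNReal.ofReal (4 * α * √2) := by
        have hC : C ≠ 0 := (ENNReal.ofReal_pos.2 (by positivity)).ne'
        rw [Finset.sum_const, Finset.card_univ, Fintype.card_fin, nsmul_eq_mul,
          show C⁻¹ * ((4 * α : ℕ) * (ENNReal.ofReal √2 * C))
            = (4 * α : ℕ) * ENNReal.ofReal √2 * (C⁻¹ * C) by ring,
          ENNReal.inv_mul_cancel hC ENNReal.ofReal_ne_top, mul_one,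
          ENNReal.ofReal_mul (by positivity), ← ENNReal.ofReal_natCast]
        push_cast
        rfl
end
end

section
/- Let γ : ℝ × I → ℝ² be a smooth curve shortening flow (∂_u γ ≠ 0 everywhere and ∂_t γ = ∂_s(∂_s γ) with ∂_s := |∂_u γ|⁻¹ ∂_u), and let θ : ℝ × I → ℝ be a smooth angle function, i.e. ∂_u γ/|∂_u γ| = (cos θ, sin θ). Then θ satisfies the (intrinsic) heat equation along the flow: ∂_t θ(u,t) = ∂_s(∂_s θ)(u,t) for all (u,t), where ∂_s θ := |∂_u γ|⁻¹ ∂_u θ. -/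
open Real MeasureTheory Set Filter
open scoped RealInnerProductSpace ENNReal

noncomputable section

/-- Arclength derivative `∂ₛ := |∂ᵤγ|⁻¹ ∂ᵤ` along the time-`t` curve of the flow `γ`,
applied to a function `f` of `(u, t)`. -/
def aderiv (γ : ℝ → ℝ → R2) {F : Type} [NormedAddCommGroup F] [NormedSpace ℝ F]
    (f : ℝ → ℝ → F) (u t : ℝ) : F :=
  ‖deriv (fun v => γ v t) u‖⁻¹ • deriv (fun v => f v t) u

/-- The unit tangent `T = ∂ᵤγ / |∂ᵤγ|`. -/
def unitT (γ : ℝ → ℝ → R2) (u t : ℝ) : R2 := aderiv γ γ u t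

/-- The unit normal `n = J T`. -/
def unitN (γ : ℝ → ℝ → R2) (u t : ℝ) : R2 := Jrot (unitT γ u t)

/-- The signed curvature `κ = ⟨∂ₛT, n⟩`. -/
def curv (γ : ℝ → ℝ → R2) (u t : ℝ) : ℝ := ⟪aderiv γ (unitT γ) u t, unitN γ u t⟫

/-- `γ : ℝ × I → ℝ²` is a smooth curve shortening flow in fixed-parametrization form:
smooth, regular (`∂ᵤγ ≠ 0`), and `∂ₜγ = ∂ₛ(∂ₛγ)` (time derivative taken within `I`). -/
structure IsCSF (γ : ℝ → ℝ → R2) (I : Set ℝ) : Prop where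
  smooth : ContDiffOn ℝ (⊤ : ℕ∞) (fun p : ℝ × ℝ => γ p.1 p.2) (univ ×ˢ I)
  regular : ∀ (u : ℝ), ∀ t ∈ I, deriv (fun v => γ v t) u ≠ 0
  flow : ∀ (u : ℝ), ∀ t ∈ I, derivWithin (fun s => γ u s) I t = aderiv γ (aderiv γ γ) u t

/-- The Gaussian weighted length `F_{x₀,l}` of the time-`t` curve (as an extended real). -/
def gaussLenE (γ : ℝ → ℝ → R2) (x₀ : R2) (l t : ℝ) : ℝ≥0∞ :=
  (ENNReal.ofReal (Real.sqrt (4 * π * l)))⁻¹ *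
    ∫⁻ u : ℝ, ENNReal.ofReal
      (Real.exp (-‖γ u t - x₀‖ ^ 2 / (4 * l)) * ‖deriv (fun v => γ v t) u‖)

/-- The total curvature of the time-`t` curve (as an extended real). -/
def totalCurvE (γ : ℝ → ℝ → R2) (t : ℝ) : ℝ≥0∞ :=
  ∫⁻ u : ℝ, ENNReal.ofReal (|curv γ u t| * ‖deriv (fun v => γ v t) u‖)

/-- The entropy of the flow: the supremum of the Gaussian weighted lengths over all
times `t ∈ I`, centers `x₀ ∈ ℝ²` and scales `l > 0`. -/
def entropyE (γ : ℝ → ℝ → R2) (I : Set ℝ) : ℝ≥0∞ :=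
  ⨆ t ∈ I, ⨆ x₀ : R2, ⨆ l ∈ Ioi (0:ℝ), gaussLenE γ x₀ l t

section AuxCSF
open Real Set
open scoped RealInnerProductSpace ContDiff

lemma toR2_apply0 (a b : ℝ) : toR2 a b 0 = a := rfl
lemma toR2_apply1 (a b : ℝ) : toR2 a b 1 = b := rfl

lemma R2_ext {x y : R2} (h0 : x 0 = y 0) (h1 : x 1 = y 1) : x = y := by
  ext i; fin_cases i <;> simpa

lemma smul_toR2 (r a b : ℝ) : r • toR2 a b = toR2 (r*a) (r*b) := by
  apply R2_ext <;> simp [toR2_apply0, toR2_apply1]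

lemma Jrot_toR2 (a b : ℝ) : Jrot (toR2 a b) = toR2 (-b) a := rfl

lemma inner_R2 (x y : R2) : ⟪x, y⟫ = x 0 * y 0 + x 1 * y 1 := by
  simp [PiLp.inner_apply, Fin.sum_univ_two]
  ring

lemma toR2_eq_smul (x y : ℝ) : toR2 x y = x • toR2 1 0 + y • toR2 0 1 := by
  apply R2_ext <;> simp [toR2_apply0, toR2_apply1]

lemma hasDerivAt_eR (a : ℝ) :
    HasDerivAt (fun x => toR2 (Real.cos x) (Real.sin x))
      (Jrot (toR2 (Real.cos a) (Real.sin a))) a := by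
  have h := ((Real.hasDerivAt_cos a).smul_const (toR2 1 0)).add
    ((Real.hasDerivAt_sin a).smul_const (toR2 0 1))
  have hf : (fun x => Real.cos x • toR2 1 0 + Real.sin x • toR2 0 1)
      = fun x => toR2 (Real.cos x) (Real.sin x) := by
    funext x; rw [← toR2_eq_smul]
  change HasDerivAt (fun x => Real.cos x • toR2 1 0 + Real.sin x • toR2 0 1) _ a at h
  rw [hf] at h
  convert h using 1
  rw [Jrot_toR2, toR2_eq_smul]

def JrotL : R2 →L[ℝ] R2 :=
  (EuclideanSpace.proj (1 : Fin 2)).smulRight (toR2 (-1) 0)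
    + (EuclideanSpace.proj (0 : Fin 2)).smulRight (toR2 0 1)

lemma Jrot_eq_JrotL (v : R2) : Jrot v = JrotL v := by
  apply R2_ext <;>
    simp [Jrot, JrotL, toR2_apply0, toR2_apply1]

variable {F' : Type*} [NormedAddCommGroup F'] [NormedSpace ℝ F']

lemma sliceu_hasDerivAt {g : ℝ → ℝ → F'} {I : Set ℝ} {u t : ℝ}
    (hg : DifferentiableWithinAt ℝ (fun p : ℝ×ℝ => g p.1 p.2) (univ ×ˢ I) (u,t)) (ht : t ∈ I) :
    HasDerivAt (fun v => g v t)
      (fderivWithin ℝ (fun p : ℝ×ℝ => g p.1 p.2) (univ ×ˢ I) (u,t) (1,0)) u := by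
  have hι : HasFDerivAt (fun v : ℝ => ((v, t) : ℝ×ℝ))
      ((ContinuousLinearMap.id ℝ ℝ).prod 0) u :=
    HasFDerivAt.prodMk (hasFDerivAt_id u) (hasFDerivAt_const t u)
  have h := HasFDerivWithinAt.comp (x := u) hg.hasFDerivWithinAt
    (hι.hasFDerivWithinAt (s := univ))
    (fun v _ => Set.mk_mem_prod trivial ht)
  rw [hasFDerivWithinAt_univ] at h
  have h2 := h.hasDerivAt
  simpa [Function.comp_def] using h2

lemma slicet_hasDerivWithinAt {g : ℝ → ℝ → F'} {I : Set ℝ} {u t : ℝ}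
    (hg : DifferentiableWithinAt ℝ (fun p : ℝ×ℝ => g p.1 p.2) (univ ×ˢ I) (u,t)) (ht : t ∈ I) :
    HasDerivWithinAt (fun s => g u s)
      (fderivWithin ℝ (fun p : ℝ×ℝ => g p.1 p.2) (univ ×ˢ I) (u,t) (0,1)) I t := by
  have hι : HasFDerivAt (fun s : ℝ => ((u, s) : ℝ×ℝ))
      ((0 : ℝ →L[ℝ] ℝ).prod (ContinuousLinearMap.id ℝ ℝ)) t :=
    HasFDerivAt.prodMk (hasFDerivAt_const u t) (hasFDerivAt_id t)
  have h := HasFDerivWithinAt.comp (x := t) hg.hasFDerivWithinAt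
    (hι.hasFDerivWithinAt (s := I))
    (fun s hs => Set.mk_mem_prod trivial hs)
  have h2 := h.hasDerivWithinAt
  simpa [Function.comp_def] using h2

lemma contDiffOn_deriv_slice {g : ℝ → ℝ → F'} {I : Set ℝ}
    (hg : ContDiffOn ℝ (∞ : WithTop ℕ∞) (fun p : ℝ×ℝ => g p.1 p.2) (univ ×ˢ I))
    (hud : UniqueDiffOn ℝ (univ ×ˢ I : Set (ℝ×ℝ))) :
    ContDiffOn ℝ (∞ : WithTop ℕ∞) (fun p : ℝ×ℝ => deriv (fun v => g v p.2) p.1) (univ ×ˢ I) := by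
  have h1 : ContDiffOn ℝ (∞ : WithTop ℕ∞)
      (fun p : ℝ×ℝ => fderivWithin ℝ (fun p : ℝ×ℝ => g p.1 p.2) (univ ×ˢ I) p ((1:ℝ),(0:ℝ)))
      (univ ×ˢ I) :=
    (hg.fderivWithin hud (by simp)).clm_apply contDiffOn_const
  refine h1.congr ?_
  rintro ⟨w, s⟩ hp
  have hs : s ∈ I := (Set.mem_prod.mp hp).2
  exact (sliceu_hasDerivAt ((hg.differentiableOn (by simp)) _ hp) hs).deriv

lemma schwarz {g : ℝ → ℝ → F'} {I : Set ℝ} {u t : ℝ}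
    (hg : ContDiffOn ℝ (∞ : WithTop ℕ∞) (fun p : ℝ×ℝ => g p.1 p.2) (univ ×ˢ I))
    (hud : UniqueDiffOn ℝ (univ ×ˢ I : Set (ℝ×ℝ))) (hudI : UniqueDiffOn ℝ I)
    (hcl : ((u, t) : ℝ×ℝ) ∈ closure (interior (univ ×ˢ I : Set (ℝ×ℝ)))) (ht : t ∈ I) :
    derivWithin (fun s => deriv (fun v => g v s) u) I t
      = deriv (fun v => derivWithin (fun s => g v s) I t) u := by
  set S : Set (ℝ×ℝ) := univ ×ˢ I with hS
  set gg : ℝ×ℝ → F' := fun p => g p.1 p.2 with hgg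
  have hp : ((u,t) : ℝ×ℝ) ∈ S := Set.mk_mem_prod trivial ht
  have hdiff : DifferentiableOn ℝ gg S := hg.differentiableOn (by simp)
  have hG : ContDiffOn ℝ (∞ : WithTop ℕ∞) (fderivWithin ℝ gg S) S := hg.fderivWithin hud (by simp)
  have hGdiff : DifferentiableOn ℝ (fderivWithin ℝ gg S) S := hG.differentiableOn (by simp)
  have key : ∀ w : ℝ×ℝ,
      fderivWithin ℝ (fun p => fderivWithin ℝ gg S p w) S (u,t)
        = (fderivWithin ℝ (fderivWithin ℝ gg S) S (u,t)).flip w := by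
    intro w
    have h := (hGdiff (u,t) hp).hasFDerivWithinAt.clm_apply
      (hasFDerivWithinAt_const w (u,t) S)
    have h2 := h.fderivWithin (hud (u,t) hp)
    simpa using h2
  have hdw : ∀ w : ℝ×ℝ, DifferentiableWithinAt ℝ
      (fun p : ℝ×ℝ => fderivWithin ℝ gg S p w) S (u,t) :=
    fun w => (hGdiff (u,t) hp).clm_apply (differentiableWithinAt_const w)
  have hL : derivWithin (fun s => deriv (fun v => g v s) u) I t
      = fderivWithin ℝ (fderivWithin ℝ gg S) S (u,t) ((0:ℝ),(1:ℝ)) ((1:ℝ),(0:ℝ)) := by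
    have e1 : derivWithin (fun s => deriv (fun v => g v s) u) I t
        = derivWithin (fun s => fderivWithin ℝ gg S (u, s) ((1:ℝ),(0:ℝ))) I t := by
      apply derivWithin_congr
      · intro s hs
        exact (sliceu_hasDerivAt (hdiff _ (Set.mk_mem_prod trivial hs)) hs).deriv
      · exact (sliceu_hasDerivAt (hdiff _ hp) ht).deriv
    rw [e1]
    have h2 := slicet_hasDerivWithinAt (g := fun a b => fderivWithin ℝ gg S (a, b) ((1:ℝ),(0:ℝ)))
      (hdw ((1:ℝ),(0:ℝ))) ht
    rw [h2.derivWithin (hudI t ht), key ((1:ℝ),(0:ℝ))]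
    simp
  have hR : deriv (fun v => derivWithin (fun s => g v s) I t) u
      = fderivWithin ℝ (fderivWithin ℝ gg S) S (u,t) ((1:ℝ),(0:ℝ)) ((0:ℝ),(1:ℝ)) := by
    have e1 : (fun v => derivWithin (fun s => g v s) I t)
        = fun v => fderivWithin ℝ gg S (v, t) ((0:ℝ),(1:ℝ)) := by
      funext v
      exact (slicet_hasDerivWithinAt (hdiff _ (Set.mk_mem_prod trivial ht)) ht).derivWithin
        (hudI t ht)
    rw [e1]
    have h2 := sliceu_hasDerivAt (g := fun a b => fderivWithin ℝ gg S (a, b) ((0:ℝ),(1:ℝ)))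
      (hdw ((0:ℝ),(1:ℝ))) ht
    rw [h2.deriv, key ((0:ℝ),(1:ℝ))]
    simp
  have hsymm := (hg (u,t) hp).isSymmSndFDerivWithinAt (by simp; exact ENat.LEInfty.out) hud hcl hp
  rw [hL, hR]
  exact hsymm _ _

lemma contDiff_slice1 {g : ℝ → ℝ → F'} {I : Set ℝ}
    (hg : ContDiffOn ℝ (∞ : WithTop ℕ∞) (fun p : ℝ×ℝ => g p.1 p.2) (univ ×ˢ I)) {t : ℝ} (ht : t ∈ I) :
    ContDiff ℝ (∞ : WithTop ℕ∞) (fun w => g w t) := by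
  rw [← contDiffOn_univ]
  exact ((hg.of_le le_rfl).comp ((ContDiff.prodMk contDiff_id contDiff_const).contDiffOn)
    (fun v _ => Set.mk_mem_prod trivial ht))

lemma aderiv2_eq (γ : ℝ → ℝ → R2) (θ : ℝ → ℝ → ℝ) {t : ℝ}
    (hθd : Differentiable ℝ (fun w => θ w t))
    (hangle : ∀ w : ℝ, unitT γ w t = toR2 (Real.cos (θ w t)) (Real.sin (θ w t))) (u : ℝ) :
    aderiv γ (aderiv γ γ) u t
      = (‖deriv (fun w => γ w t) u‖⁻¹ * deriv (fun w => θ w t) u) •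
        Jrot (toR2 (Real.cos (θ u t)) (Real.sin (θ u t))) := by
  have hfun : (fun w => aderiv γ γ w t)
      = fun w => toR2 (Real.cos (θ w t)) (Real.sin (θ w t)) :=
    funext fun w => hangle w
  have hE : HasDerivAt (fun w => toR2 (Real.cos (θ w t)) (Real.sin (θ w t)))
      ((deriv (fun w => θ w t) u) • Jrot (toR2 (Real.cos (θ u t)) (Real.sin (θ u t)))) u := by
    have h := HasDerivAt.scomp (𝕜 := ℝ) u (hasDerivAt_eR (θ u t)) ((hθd u).hasDerivAt)
    simpa [Function.comp_def] using h
  show ‖deriv (fun w => γ w t) u‖⁻¹ • deriv (fun w => aderiv γ γ w t) u = _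
  rw [hfun, hE.deriv, smul_smul]

end AuxCSF

theorem angle_heat_equation
    (γ : ℝ → ℝ → R2) (θ : ℝ → ℝ → ℝ) (I : Set ℝ) (hI : OrdConnected I)
    (hcsf : IsCSF γ I)
    (hθ : ContDiffOn ℝ (⊤ : ℕ∞) (fun p : ℝ × ℝ => θ p.1 p.2) (univ ×ˢ I))
    (hangle : ∀ (u : ℝ), ∀ t ∈ I,
      unitT γ u t = toR2 (Real.cos (θ u t)) (Real.sin (θ u t))) :
    ∀ (u : ℝ), ∀ t ∈ I,
      derivWithin (fun s => θ u s) I t = aderiv γ (aderiv γ θ) u t := by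
  intro u t ht
  classical
  have hvne : ∀ (w s : ℝ), s ∈ I → ‖deriv (fun x => γ x s) w‖ ≠ 0 :=
    fun w s hs => norm_ne_zero_iff.mpr (hcsf.regular w s hs)
  have hθslice : ∀ s ∈ I, Differentiable ℝ (fun w => θ w s) :=
    fun s hs => (contDiff_slice1 hθ hs).differentiable (by simp)
  have hpyth := Real.sin_sq_add_cos_sq (θ u t)
  by_cases hnd : ∃ a ∈ I, ∃ b ∈ I, a < b
  · obtain ⟨a, ha, b, hb, hab⟩ := hnd
    have hIoo : Ioo a b ⊆ interior I :=
      interior_maximal (fun x hx => hI.out ha hb ⟨hx.1.le, hx.2.le⟩) isOpen_Ioo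
    have hintI : (interior I).Nonempty := ⟨(a+b)/2, hIoo ⟨by linarith, by linarith⟩⟩
    have hconv : Convex ℝ I := convex_iff_ordConnected.mpr hI
    have hudI : UniqueDiffOn ℝ I := uniqueDiffOn_convex hconv hintI
    have hSconv : Convex ℝ (univ ×ˢ I : Set (ℝ×ℝ)) := convex_univ.prod hconv
    have hSint : (interior (univ ×ˢ I : Set (ℝ×ℝ))).Nonempty := by
      rw [interior_prod_eq]
      exact ⟨((0:ℝ), (a+b)/2), Set.mk_mem_prod (by simp) (hIoo ⟨by linarith, by linarith⟩)⟩
    have hud : UniqueDiffOn ℝ (univ ×ˢ I : Set (ℝ×ℝ)) := uniqueDiffOn_convex hSconv hSint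
    have hclI : t ∈ closure (interior I) := by
      rcases lt_or_ge t b with h | h
      · have h1 : Ioo t b ⊆ interior I :=
          interior_maximal (fun x hx => hI.out ht hb ⟨hx.1.le, hx.2.le⟩) isOpen_Ioo
        have h2 : t ∈ closure (Ioo t b) := by
          rw [closure_Ioo h.ne]; exact ⟨le_rfl, h.le⟩
        exact closure_mono h1 h2
      · have hat : a < t := lt_of_lt_of_le hab h
        have h1 : Ioo a t ⊆ interior I :=
          interior_maximal (fun x hx => hI.out ha ht ⟨hx.1.le, hx.2.le⟩) isOpen_Ioo
        have h2 : t ∈ closure (Ioo a t) := by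
          rw [closure_Ioo hat.ne]; exact ⟨hat.le, le_rfl⟩
        exact closure_mono h1 h2
    have hcl : ((u,t) : ℝ×ℝ) ∈ closure (interior (univ ×ˢ I : Set (ℝ×ℝ))) := by
      rw [interior_prod_eq, closure_prod_eq]
      exact Set.mk_mem_prod (by simp) hclI
    have hp : ((u,t):ℝ×ℝ) ∈ (univ ×ˢ I : Set (ℝ×ℝ)) := Set.mk_mem_prod trivial ht
    -- smooth 2-variable objects
    have hvf : ContDiffOn ℝ ((⊤ : ℕ∞) : WithTop ℕ∞)
        (fun p : ℝ×ℝ => ‖deriv (fun v => γ v p.2) p.1‖) (univ ×ˢ I) :=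
      (contDiffOn_deriv_slice hcsf.smooth hud).norm ℝ
        (fun p hp' => hcsf.regular p.1 p.2 (Set.mem_prod.mp hp').2)
    have hkf : ContDiffOn ℝ ((⊤ : ℕ∞) : WithTop ℕ∞)
        (fun p : ℝ×ℝ => ‖deriv (fun v => γ v p.2) p.1‖⁻¹ * deriv (fun v => θ v p.2) p.1)
        (univ ×ˢ I) :=
      (hvf.inv (fun p hp' =>
          norm_ne_zero_iff.mpr (hcsf.regular p.1 p.2 (Set.mem_prod.mp hp').2))).mul
        (contDiffOn_deriv_slice hθ hud)
    -- point values
    have hv0 : ‖deriv (fun v => γ v t) u‖ ≠ 0 := hvne u t ht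
    -- the curve speed identity  ∂ᵤγ = v • (cos θ, sin θ)
    have f1 : ∀ s ∈ I, ∀ w : ℝ, deriv (fun x => γ x s) w
        = ‖deriv (fun x => γ x s) w‖ • toR2 (Real.cos (θ w s)) (Real.sin (θ w s)) := by
      intro s hs w
      have h := hangle w s hs
      have hne : ‖deriv (fun x => γ x s) w‖ ≠ 0 := hvne w s hs
      calc deriv (fun x => γ x s) w
          = ‖deriv (fun x => γ x s) w‖ •
            (‖deriv (fun x => γ x s) w‖⁻¹ • deriv (fun x => γ x s) w) := by
            rw [smul_smul, mul_inv_cancel₀ hne, one_smul]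
        _ = _ := by
            rw [show (‖deriv (fun x => γ x s) w‖⁻¹ • deriv (fun x => γ x s) w)
                = unitT γ w s from rfl, h]
    -- time-slice derivatives
    have hθsliceT : HasDerivWithinAt (fun s => θ u s)
        (fderivWithin ℝ (fun p : ℝ×ℝ => θ p.1 p.2) (univ ×ˢ I) (u,t) (0,1)) I t :=
      slicet_hasDerivWithinAt (hθ.differentiableOn (by simp) _ hp) ht
    set dθt : ℝ := fderivWithin ℝ (fun p : ℝ×ℝ => θ p.1 p.2) (univ ×ˢ I) (u,t) (0,1) with hdθt
    have hvsliceT : HasDerivWithinAt (fun s => ‖deriv (fun v => γ v s) u‖)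
        (fderivWithin ℝ (fun p : ℝ×ℝ => ‖deriv (fun v => γ v p.2) p.1‖) (univ ×ˢ I) (u,t) (0,1))
        I t :=
      slicet_hasDerivWithinAt (g := fun w s => ‖deriv (fun v => γ v s) w‖)
        (hvf.differentiableOn (by simp) _ hp) ht
    set dv : ℝ := fderivWithin ℝ (fun p : ℝ×ℝ => ‖deriv (fun v => γ v p.2) p.1‖)
        (univ ×ˢ I) (u,t) (0,1) with hdv
    have hEt : HasDerivWithinAt (fun s => toR2 (Real.cos (θ u s)) (Real.sin (θ u s)))
        (dθt • Jrot (toR2 (Real.cos (θ u t)) (Real.sin (θ u t)))) I t := by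
      have h := HasDerivAt.scomp_hasDerivWithinAt (𝕜 := ℝ) t (hasDerivAt_eR (θ u t)) hθsliceT
      simpa [Function.comp_def] using h
    have hA : HasDerivWithinAt (fun s => deriv (fun v => γ v s) u)
        (‖deriv (fun v => γ v t) u‖ • (dθt • Jrot (toR2 (Real.cos (θ u t)) (Real.sin (θ u t))))
          + dv • toR2 (Real.cos (θ u t)) (Real.sin (θ u t))) I t := by
      have h := hvsliceT.smul hEt
      exact h.congr (fun s hs => f1 s hs u) (f1 t ht u)
    -- space-slice derivatives
    have hθuslice : HasDerivAt (fun w => θ w t) (deriv (fun v => θ v t) u) u :=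
      ((hθslice t ht) u).hasDerivAt
    set duθ : ℝ := deriv (fun v => θ v t) u with hduθ
    have hEu : HasDerivAt (fun w => toR2 (Real.cos (θ w t)) (Real.sin (θ w t)))
        (duθ • Jrot (toR2 (Real.cos (θ u t)) (Real.sin (θ u t)))) u := by
      have h := HasDerivAt.scomp (𝕜 := ℝ) u (hasDerivAt_eR (θ u t)) hθuslice
      simpa [Function.comp_def] using h
    have hJEu : HasDerivAt (fun w => Jrot (toR2 (Real.cos (θ w t)) (Real.sin (θ w t))))
        (duθ • Jrot (Jrot (toR2 (Real.cos (θ u t)) (Real.sin (θ u t))))) u := by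
      have h := JrotL.hasFDerivAt.comp_hasDerivAt u hEu
      simpa [Function.comp_def, ← Jrot_eq_JrotL] using h
    have hksliceU : HasDerivAt
        (fun w => ‖deriv (fun v => γ v t) w‖⁻¹ * deriv (fun v => θ v t) w)
        (fderivWithin ℝ
          (fun p : ℝ×ℝ => ‖deriv (fun v => γ v p.2) p.1‖⁻¹ * deriv (fun v => θ v p.2) p.1)
          (univ ×ˢ I) (u,t) (1,0)) u :=
      sliceu_hasDerivAt (g := fun w s => ‖deriv (fun v => γ v s) w‖⁻¹ * deriv (fun v => θ v s) w)
        (hkf.differentiableOn (by simp) _ hp) ht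
    set dk : ℝ := fderivWithin ℝ
        (fun p : ℝ×ℝ => ‖deriv (fun v => γ v p.2) p.1‖⁻¹ * deriv (fun v => θ v p.2) p.1)
        (univ ×ˢ I) (u,t) (1,0) with hdk
    have hBfun : (fun w => derivWithin (fun s => γ w s) I t)
        = fun w => (‖deriv (fun v => γ v t) w‖⁻¹ * deriv (fun v => θ v t) w) •
            Jrot (toR2 (Real.cos (θ w t)) (Real.sin (θ w t))) := by
      funext w
      rw [hcsf.flow w t ht, aderiv2_eq γ θ (hθslice t ht) (fun w' => hangle w' t ht) w]
    have hB : HasDerivAt (fun w => derivWithin (fun s => γ w s) I t)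
        ((‖deriv (fun v => γ v t) u‖⁻¹ * duθ) •
            (duθ • Jrot (Jrot (toR2 (Real.cos (θ u t)) (Real.sin (θ u t)))))
          + dk • Jrot (toR2 (Real.cos (θ u t)) (Real.sin (θ u t)))) u := by
      rw [hBfun]
      exact hksliceU.smul hJEu
    -- Schwarz symmetry of second derivatives
    have hAB := schwarz (g := γ) hcsf.smooth hud hudI hcl ht
    rw [hA.derivWithin (hudI t ht), hB.deriv] at hAB
    -- extract components
    have h0 := congrArg (fun z : R2 => z 0) hAB
    have h1 := congrArg (fun z : R2 => z 1) hAB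
    simp only [Jrot_toR2, smul_toR2, PiLp.add_apply, toR2_apply0, toR2_apply1] at h0 h1
    have key : ‖deriv (fun v => γ v t) u‖ * dθt = dk := by
      linear_combination (-(Real.sin (θ u t))) * h0 + (Real.cos (θ u t)) * h1
        + (dk - ‖deriv (fun v => γ v t) u‖ * dθt) * hpyth
    have hLHS : derivWithin (fun s => θ u s) I t = dθt := hθsliceT.derivWithin (hudI t ht)
    have hRHSfun : (fun w => aderiv γ θ w t)
        = fun w => ‖deriv (fun v => γ v t) w‖⁻¹ * deriv (fun v => θ v t) w := by
      funext w
      simp [aderiv, smul_eq_mul]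
    have hRHS : aderiv γ (aderiv γ θ) u t = ‖deriv (fun v => γ v t) u‖⁻¹ * dk := by
      show ‖deriv (fun v => γ v t) u‖⁻¹ • deriv (fun w => aderiv γ θ w t) u = _
      rw [hRHSfun, hksliceU.deriv, smul_eq_mul]
    rw [hLHS, hRHS, ← key, inv_mul_cancel_left₀ hv0]
  · -- degenerate case : `I` has at most one point, all within-derivatives vanish
    push_neg at hnd
    have hbot : nhdsWithin t (I \ {t}) = ⊥ := by
      have hempty : I \ {t} = (∅ : Set ℝ) := by
        ext x
        simp only [mem_diff, mem_singleton_iff, mem_empty_iff_false, iff_false, not_and,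
          not_not]
        intro hx
        exact le_antisymm (hnd t ht x hx) (hnd x hx t ht)
      rw [hempty]
      simp
    have hduθ : ∀ w : ℝ, deriv (fun x => θ x t) w = 0 := by
      intro w
      have hflow := hcsf.flow w t ht
      rw [derivWithin_zero_of_not_accPt (by rw [accPt_principal_iff_nhdsWithin]; exact not_neBot.mpr hbot)] at hflow
      have h2 := aderiv2_eq γ θ (hθslice t ht) (fun w' => hangle w' t ht) w
      rw [← hflow] at h2
      have h3 := congrArg
        (fun z : R2 => ⟪z, Jrot (toR2 (Real.cos (θ w t)) (Real.sin (θ w t)))⟫) h2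
      simp only [inner_zero_left, real_inner_smul_left, Jrot_toR2, inner_R2,
        toR2_apply0, toR2_apply1] at h3
      have hpy := Real.sin_sq_add_cos_sq (θ w t)
      have h4 : ‖deriv (fun x => γ x t) w‖⁻¹ * deriv (fun x => θ x t) w = 0 := by
        nlinarith [h3, hpy]
      exact (mul_eq_zero.mp h4).resolve_left (inv_ne_zero (hvne w t ht))
    have hRHSfun : (fun w => aderiv γ θ w t) = fun _ => (0:ℝ) := by
      funext w
      show ‖deriv (fun v => γ v t) w‖⁻¹ • deriv (fun v => θ v t) w = 0
      rw [hduθ w, smul_zero]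
    rw [derivWithin_zero_of_not_accPt (by rw [accPt_principal_iff_nhdsWithin]; exact not_neBot.mpr hbot)]
    show (0:ℝ) = ‖deriv (fun v => γ v t) u‖⁻¹ • deriv (fun w => aderiv γ θ w t) u
    rw [hRHSfun, deriv_const, smul_zero]
end
end

section
/- Let 0 < δ < 1 and let γ : (-2δ, 2δ) → ℝ² be a C² unit-speed curve with γ'(0) = (1,0), signed curvature κ(0) = κ₀ > 0, and (1/2)κ₀ ≤ κ(s) ≤ 2κ₀ for all s ∈ (-δ, δ). Then there exists R > 0 (depending only on κ₀, δ and γ(0)) such that for every Y ≥ R there is s ∈ (-δ, δ) for which the normal line of γ at γ(s) passes through (0, Y), i.e. ⟨(0, Y) - γ(s), γ'(s)⟩ = 0. -/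
/-!
The normal line at `γ(s)` passes through `(0, Y)` iff `Y · γ₂'(s) = ⟪γ(s), γ'(s)⟫`. Since
`γ'(0) = (1, 0)`, the curvature at `0` is `γ₂''(0) = κ₀ > 0`, so `γ₂'` vanishes at `0` and changes
sign there: `γ₂'(a) < 0 < γ₂'(b)` for some `-δ < a < 0 < b < δ`. For `Y` large,
`Y · γ₂' - ⟪γ, γ'⟫` is then negative at `a` and positive at `b`, and the intermediate value
theorem gives the zero.
-/

open Real MeasureTheory Set Filter
open scoped RealInnerProductSpace ENNReal
open scoped Topology

noncomputable section

theorem inner_toR2_right (v : R2) (x y : ℝ) : ⟪v, toR2 x y⟫ = v 0 * x + v 1 * y := by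
  simp [toR2, PiLp.inner_apply, Fin.sum_univ_two, mul_comm]

theorem inner_Jrot_toR2_one_zero (v : R2) : ⟪v, Jrot (toR2 1 0)⟫ = v 1 := by
  rw [Jrot, inner_toR2_right]
  simp [toR2]

theorem inner_toR2_zero_sub (Y : ℝ) (p v : R2) : ⟪toR2 0 Y - p, v⟫ = Y * v 1 - ⟪p, v⟫ := by
  rw [inner_sub_left, real_inner_comm, inner_toR2_right]
  ring

theorem HasDerivAt.euclideanSpace_apply {ι : Type*} [Fintype ι] {f : ℝ → EuclideanSpace ℝ ι}
    {f' : EuclideanSpace ℝ ι} {x : ℝ} (hf : HasDerivAt f f' x) (i : ι) :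
    HasDerivAt (fun s => f s i) (f' i) x :=
  (PiLp.hasFDerivAt_apply (p := 2) (f x) i).comp_hasDerivAt x hf

theorem exists_neg_pos_of_hasDerivAt_pos {g : ℝ → ℝ} {g' x ε : ℝ} (hg : HasDerivAt g g' x)
    (hg' : 0 < g') (hx : g x = 0) (hε : 0 < ε) :
    ∃ a ∈ Ioo (x - ε) x, ∃ b ∈ Ioo x (x + ε), g a < 0 ∧ 0 < g b := by
  have hslope : ∀ᶠ s in 𝓝[≠] x, 0 < slope g x s :=
    (hasDerivAt_iff_tendsto_slope.mp hg).eventually (eventually_gt_nhds hg')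
  obtain ⟨a, ha_slope, ha⟩ := ((hslope.filter_mono (nhdsLT_le_nhdsNE x)).and
    (Ioo_mem_nhdsLT (sub_lt_self x hε))).exists
  obtain ⟨b, hb_slope, hb⟩ := ((hslope.filter_mono (nhdsGT_le_nhdsNE x)).and
    (Ioo_mem_nhdsGT (lt_add_of_pos_right x hε))).exists
  exact ⟨a, ha, b, hb, neg_of_slope_pos ha.2 ha_slope hx, pos_of_slope_pos hb.1 hb_slope hx⟩

theorem eventually_exists_mul_eq_of_neg_of_pos {g c : ℝ → ℝ} {a b : ℝ} (hab : a ≤ b)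
    (hg : ContinuousOn g (Icc a b)) (hc : ContinuousOn c (Icc a b)) (ha : g a < 0)
    (hb : 0 < g b) : ∀ᶠ Y in atTop, ∃ s ∈ Icc a b, Y * g s = c s := by
  filter_upwards [eventually_gt_atTop (c a / g a), eventually_gt_atTop (c b / g b)]
    with Y hYa hYb
  have hfa : Y * g a - c a < 0 := by
    have := (div_lt_iff_of_neg ha).mp hYa
    linarith
  have hfb : 0 < Y * g b - c b := by
    have := (div_lt_iff₀ hb).mp hYb
    linarith
  obtain ⟨s, hs, hfs⟩ := intermediate_value_Icc hab ((continuousOn_const.mul hg).sub hc)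
    ⟨hfa.le, hfb.le⟩
  exact ⟨s, hs, sub_eq_zero.mp hfs⟩

theorem normal_line_surjectivity_general
    (δ κ₀ : ℝ) (hδ0 : 0 < δ)
    (γ : ℝ → R2)
    (hγ : ContDiffOn ℝ 2 γ (Ioo (-(2 * δ)) (2 * δ)))
    (htang : deriv γ 0 = toR2 1 0)
    (κ : ℝ → ℝ) (hκdef : ∀ s, κ s = ⟪deriv (deriv γ) s, Jrot (deriv γ s)⟫)
    (hκ0 : κ 0 = κ₀) (hκ₀pos : 0 < κ₀) :
    ∃ R > 0, ∀ Y : ℝ, R ≤ Y →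
      ∃ s ∈ Ioo (-δ) δ, ⟪toR2 0 Y - γ s, deriv γ s⟫ = 0 := by
  have hγ' : ContDiffOn ℝ 1 (deriv γ) (Ioo (-(2 * δ)) (2 * δ)) :=
    hγ.deriv_of_isOpen isOpen_Ioo (by norm_num)
  have hvert : HasDerivAt (fun s => deriv γ s 1) κ₀ 0 := by
    have hdiff : DifferentiableAt ℝ (deriv γ) 0 :=
      (hγ'.differentiableOn one_ne_zero).differentiableAt
        (Ioo_mem_nhds (by linarith) (by linarith))
    rw [← hκ0, hκdef, htang, inner_Jrot_toR2_one_zero]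
    exact hdiff.hasDerivAt.euclideanSpace_apply 1
  obtain ⟨a, ha, b, hb, hga, hgb⟩ :=
    exists_neg_pos_of_hasDerivAt_pos hvert hκ₀pos (by simp [htang, toR2]) hδ0
  have hIcc : Icc a b ⊆ Ioo (-(2 * δ)) (2 * δ) :=
    Icc_subset_Ioo (by linarith [ha.1]) (by linarith [hb.2])
  obtain ⟨R, hR⟩ := eventually_atTop.mp <| eventually_exists_mul_eq_of_neg_of_pos
    (by linarith [ha.2, hb.1])
    ((PiLp.continuous_apply 2 _ 1).comp_continuousOn (hγ'.continuousOn.mono hIcc))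
    ((hγ.continuousOn.inner hγ'.continuousOn).mono hIcc) hga hgb
  refine ⟨max R 1, by positivity, fun Y hY => ?_⟩
  obtain ⟨s, hs, hYs⟩ := hR Y (le_of_max_le_left hY)
  refine ⟨s, ⟨by linarith [ha.1, hs.1], by linarith [hb.2, hs.2]⟩, ?_⟩
  rw [inner_toR2_zero_sub, sub_eq_zero]
  exact hYs

/-- A `C²` unit-speed curve with `γ'(0) = (1,0)`, curvature `κ₀ > 0` at
`0` and curvature comparable to `κ₀` on `(-δ,δ)` has all normal-line intersections with the
`y`-axis above some height `R`: for every `Y ≥ R` some normal line passes through `(0,Y)`. -/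
theorem normal_line_surjectivity
    (δ κ₀ : ℝ) (hδ0 : 0 < δ) (hδ1 : δ < 1)
    (γ : ℝ → R2)
    (hγ : ContDiffOn ℝ 2 γ (Ioo (-(2 * δ)) (2 * δ)))
    (hunit : ∀ s ∈ Ioo (-(2 * δ)) (2 * δ), ‖deriv γ s‖ = 1)
    (htang : deriv γ 0 = toR2 1 0)
    (κ : ℝ → ℝ) (hκdef : ∀ s, κ s = ⟪deriv (deriv γ) s, Jrot (deriv γ s)⟫)
    (hκ0 : κ 0 = κ₀) (hκ₀pos : 0 < κ₀)
    (hbound : ∀ s ∈ Ioo (-δ) δ, κ₀ / 2 ≤ κ s ∧ κ s ≤ 2 * κ₀) :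
    ∃ R > 0, ∀ Y : ℝ, R ≤ Y →
      ∃ s ∈ Ioo (-δ) δ, ⟪toR2 0 Y - γ s, deriv γ s⟫ = 0 :=
  normal_line_surjectivity_general δ κ₀ hδ0 γ hγ htang κ hκdef hκ0 hκ₀pos
end
end

section
/- Let γ : ℝ → ℝ² be an injective unit-speed (|γ'| = 1) curve with finite entropy, i.e. there exists Λ < ∞ such that (4πλ)^{-1/2} ∫_ℝ exp(-|γ(s) - x₀|²/(4λ)) ds ≤ Λ for all x₀ ∈ ℝ² and λ > 0. Then for every x₀ ∈ ℝ², |γ(s) - x₀| → ∞ as s → +∞ and as s → -∞. -/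
open Real MeasureTheory Set Filter
open scoped RealInnerProductSpace ENNReal

noncomputable section

/-!
A unit-speed curve is 1-Lipschitz, so `f s = ‖γ s - x₀‖` is 1-Lipschitz. Finite entropy at scale
`λ = 1` says `∫ exp (-f² / 4) < ∞`, whence by Markov's inequality every sublevel set `{f ≤ R}` has
finite length. If `f` did not tend to infinity, it would drop below `R` at times `s` tending to
`±∞`, and the Lipschitz bound would put the whole unit interval after each such `s` in
`{f ≤ R + 1}`; this contradicts the tails of a finite-measure set having vanishing measure.
-/

open scoped NNReal Topology

theorem lipschitzWith_one_of_norm_deriv_eq_one {E : Type*} [NormedAddCommGroup E]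
    [NormedSpace ℝ E] {f : ℝ → E} (hf : ∀ s, ‖deriv f s‖ = 1) : LipschitzWith 1 f :=
  lipschitzWith_of_nnnorm_deriv_le
    (fun s => differentiableAt_of_deriv_ne_zero (norm_ne_zero_iff.1 (by simp [hf s])))
    fun s => by simp [← NNReal.coe_le_coe, hf s]

theorem measure_norm_le_ne_top_of_lintegral_exp_ne_top {α E : Type*} [MeasurableSpace α]
    {μ : Measure α} [NormedAddCommGroup E] [MeasurableSpace E] [OpensMeasurableSpace E]
    {g : α → E} (hg : AEMeasurable g μ) {c : ℝ} (hc : 0 ≤ c)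
    (hint : ∫⁻ x, ENNReal.ofReal (exp (-‖g x‖ ^ 2 / c)) ∂μ ≠ ∞) (R : ℝ) :
    μ {x | ‖g x‖ ≤ R} ≠ ∞ := by
  set ε := ENNReal.ofReal (exp (-R ^ 2 / c))
  have hε : ε ≠ 0 := by simp [ε, exp_pos]
  refine (ENNReal.lt_top_of_mul_ne_top_right (ne_top_of_le_ne_top hint ?_) hε).ne
  calc ε * μ {x | ‖g x‖ ≤ R}
      ≤ ε * μ {x | ε ≤ ENNReal.ofReal (exp (-‖g x‖ ^ 2 / c))} := by
        refine mul_le_mul_right (measure_mono fun x (hx : ‖g x‖ ≤ R) => ?_) ε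
        exact ENNReal.ofReal_le_ofReal (exp_le_exp.2 (by gcongr))
    _ ≤ _ := mul_meas_ge_le_lintegral₀ (by fun_prop) ε

theorem tendsto_measure_inter_Ici_atTop_zero (μ : Measure ℝ) {S : Set ℝ} (hS : MeasurableSet S)
    (hμS : μ S ≠ ∞) : Tendsto (fun a => μ (S ∩ Ici a)) atTop (𝓝 0) := by
  have hInter : ⋂ a : ℝ, S ∩ Ici a = ∅ := by
    refine eq_empty_of_forall_notMem fun x hx => ?_
    have := (mem_iInter.1 hx (x + 1)).2
    simp only [mem_Ici] at this
    linarith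
  simpa [Function.comp_def, hInter] using
    tendsto_measure_iInter_atTop (μ := μ) (s := fun a => S ∩ Ici a)
      (fun _ => (hS.inter measurableSet_Ici).nullMeasurableSet)
      (fun _ _ hab => inter_subset_inter_right _ (Ici_subset_Ici.2 hab))
      ⟨0, ne_top_of_le_ne_top hμS (measure_mono inter_subset_left)⟩

theorem LipschitzWith.tendsto_atTop_of_volume_sublevel_ne_top {f : ℝ → ℝ} {K : ℝ≥0}
    (hf : LipschitzWith K f) (hfin : ∀ R, volume {s | f s ≤ R} ≠ ∞) :
    Tendsto f atTop atTop := by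
  refine tendsto_atTop.2 fun R => ?_
  set S := {s | f s ≤ R + K}
  have hS : MeasurableSet S := measurableSet_le hf.continuous.measurable measurable_const
  obtain ⟨a, ha⟩ := eventually_atTop.1 <|
    (tendsto_measure_inter_Ici_atTop_zero volume hS (hfin _)).eventually (gt_mem_nhds one_pos)
  refine eventually_atTop.2 ⟨a, fun s hs => ?_⟩
  by_contra! hlt
  have hIcc : Icc s (s + 1) ⊆ S ∩ Ici a := fun t ht => by
    have hdist : dist t s ≤ 1 := by
      rw [Real.dist_eq, abs_le]
      constructor <;> linarith [ht.1, ht.2]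
    have hlip : f t - f s ≤ K * dist t s := (le_abs_self _).trans (hf.dist_le_mul t s)
    have hK : (K : ℝ) * dist t s ≤ K := mul_le_of_le_one_right K.2 hdist
    exact ⟨show f t ≤ R + K by linarith, hs.trans ht.1⟩
  have := (measure_mono hIcc).trans_lt (ha a le_rfl)
  simp at this

theorem LipschitzWith.tendsto_atBot_of_volume_sublevel_ne_top {f : ℝ → ℝ} {K : ℝ≥0}
    (hf : LipschitzWith K f) (hfin : ∀ R, volume {s | f s ≤ R} ≠ ∞) :
    Tendsto f atBot atTop := by
  have hneg : LipschitzWith K (f ∘ Neg.neg) := mul_one K ▸ hf.comp LipschitzWith.id.neg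
  have := hneg.tendsto_atTop_of_volume_sublevel_ne_top fun R => by
    rw [show {s | (f ∘ Neg.neg) s ≤ R} = Neg.neg ⁻¹' {s | f s ≤ R} from rfl,
      Measure.measure_preimage_neg]
    exact hfin R
  simpa [Function.comp_def] using this.comp tendsto_neg_atBot_atTop

theorem dist_tendsto_atTop_of_finite_entropy_general
    (γ : ℝ → R2)
    (hunit : ∀ s : ℝ, ‖deriv γ s‖ = 1)
    (Λ : ℝ)
    (hΛ : ∀ x₀ : R2, ∀ l : ℝ, 0 < l →
      (ENNReal.ofReal (Real.sqrt (4 * π * l)))⁻¹ *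
        (∫⁻ s : ℝ, ENNReal.ofReal (Real.exp (-‖γ s - x₀‖ ^ 2 / (4 * l))))
      ≤ ENNReal.ofReal Λ) :
    ∀ x₀ : R2,
      Tendsto (fun s => ‖γ s - x₀‖) atTop atTop ∧
      Tendsto (fun s => ‖γ s - x₀‖) atBot atTop := by
  intro x₀
  have hγ : LipschitzWith 1 γ := lipschitzWith_one_of_norm_deriv_eq_one hunit
  have hdist : LipschitzWith 1 (fun s => ‖γ s - x₀‖) := by
    simpa [Function.comp_def, dist_eq_norm] using (LipschitzWith.dist_left x₀).comp hγ
  have hint : ∫⁻ s : ℝ, ENNReal.ofReal (exp (-‖γ s - x₀‖ ^ 2 / (4 * 1))) ≠ ∞ :=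
    (ENNReal.lt_top_of_mul_ne_top_right (ne_top_of_le_ne_top ENNReal.ofReal_ne_top
      (hΛ x₀ 1 one_pos)) (ENNReal.inv_ne_zero.2 ENNReal.ofReal_ne_top)).ne
  have hfin : ∀ R, volume {s | ‖γ s - x₀‖ ≤ R} ≠ ∞ :=
    measure_norm_le_ne_top_of_lintegral_exp_ne_top
      (hγ.continuous.sub continuous_const).aemeasurable (by norm_num) hint
  exact ⟨hdist.tendsto_atTop_of_volume_sublevel_ne_top hfin,
    hdist.tendsto_atBot_of_volume_sublevel_ne_top hfin⟩

/-- An injective unit-speed curve `γ : ℝ → ℝ²` with finite entropy is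
proper: `|γ(s) - x₀| → ∞` as `s → ±∞`, for every `x₀`. -/
theorem dist_tendsto_atTop_of_finite_entropy
    (γ : ℝ → R2) (hinj : Function.Injective γ)
    (hunit : ∀ s : ℝ, ‖deriv γ s‖ = 1)
    (Λ : ℝ)
    (hΛ : ∀ x₀ : R2, ∀ l : ℝ, 0 < l →
      (ENNReal.ofReal (Real.sqrt (4 * π * l)))⁻¹ *
        (∫⁻ s : ℝ, ENNReal.ofReal (Real.exp (-‖γ s - x₀‖ ^ 2 / (4 * l))))
      ≤ ENNReal.ofReal Λ) :
    ∀ x₀ : R2,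
      Tendsto (fun s => ‖γ s - x₀‖) atTop atTop ∧
      Tendsto (fun s => ‖γ s - x₀‖) atBot atTop :=
  dist_tendsto_atTop_of_finite_entropy_general γ hunit Λ hΛ
end
end

section
/- Let a > 0 and k ≠ 0, and let γ : ℝ → ℝ² parametrize the logarithmic spiral by γ(φ) = a e^{kφ} (cos φ, sin φ). Then for every x₀ ∈ ℝ² and every λ > 0, (4πλ)^{-1/2} ∫_ℝ exp(-|γ(φ) - x₀|²/(4λ)) |γ'(φ)| dφ ≤ √(1 + k²)/|k|; that is, the entropy of the logarithmic spiral is at most 1/|sin(arctan k)| = √(1 + k²)/|k|. -/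
open Real MeasureTheory Set Filter
open scoped RealInnerProductSpace ENNReal

noncomputable section

/-!
Along the spiral `‖γ φ‖ = r φ = a e^{kφ}` and `‖γ' φ‖ = √(1+k²) r φ = (√(1+k²)/|k|) |r' φ|`.
Since `‖γ φ - x₀‖ ≥ |r φ - ‖x₀‖|`, the Gaussian weight is at most the one-dimensional Gaussian
centred at `‖x₀‖` evaluated at `r φ`; substituting `x = r φ`, which is injective, bounds the
weighted length by `√(1+k²)/|k|` times the full one-dimensional Gaussian integral `√(4πl)`.
-/

lemma norm_toR2 (x y : ℝ) : ‖toR2 x y‖ = √(x ^ 2 + y ^ 2) := by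
  simp [toR2, EuclideanSpace.norm_eq, Fin.sum_univ_two, sq_abs]

lemma hasDerivAt_toR2 {x y : ℝ → ℝ} {x' y' t : ℝ} (hx : HasDerivAt x x' t)
    (hy : HasDerivAt y y' t) :
    HasDerivAt (fun s => toR2 (x s) (y s)) (toR2 x' y') t := by
  have hpi : HasDerivAt (fun s => ![x s, y s]) ![x', y'] t := by
    refine hasDerivAt_pi.2 fun i => ?_
    fin_cases i <;> simpa
  exact (PiLp.continuousLinearEquiv 2 ℝ _).symm.hasFDerivAt.comp_hasDerivAt t hpi

lemma norm_toR2_polar (ρ φ : ℝ) : ‖toR2 (ρ * cos φ) (ρ * sin φ)‖ = |ρ| := by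
  rw [norm_toR2, ← sqrt_sq_eq_abs]
  congr 1
  linear_combination ρ ^ 2 * cos_sq_add_sin_sq φ

section Polar

variable {r : ℝ → ℝ} {r' φ : ℝ}

lemma hasDerivAt_toR2_polar (hr : HasDerivAt r r' φ) :
    HasDerivAt (fun t => toR2 (r t * cos t) (r t * sin t))
      (toR2 (r' * cos φ - r φ * sin φ) (r' * sin φ + r φ * cos φ)) φ :=
  hasDerivAt_toR2 ((hr.mul (hasDerivAt_cos φ)).congr_deriv (by ring))
    ((hr.mul (hasDerivAt_sin φ)).congr_deriv (by ring))

lemma norm_deriv_toR2_polar (hr : HasDerivAt r r' φ) :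
    ‖deriv (fun t => toR2 (r t * cos t) (r t * sin t)) φ‖ = √(r' ^ 2 + r φ ^ 2) := by
  rw [(hasDerivAt_toR2_polar hr).deriv, norm_toR2]
  congr 1
  linear_combination (r' ^ 2 + r φ ^ 2) * cos_sq_add_sin_sq φ

end Polar

lemma lintegral_exp_neg_sq_sub_div (c : ℝ) {l : ℝ} (hl : 0 < l) :
    ∫⁻ x : ℝ, ENNReal.ofReal (exp (-(x - c) ^ 2 / (4 * l))) = ENNReal.ofReal √(4 * π * l) := by
  have hb : 0 < 1 / (4 * l) := by positivity
  have hform : ∀ x : ℝ, -(x - c) ^ 2 / (4 * l) = -(1 / (4 * l)) * (x - c) ^ 2 := fun x => by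
    field_simp
  simp_rw [hform]
  rw [← ofReal_integral_eq_lintegral_ofReal ((integrable_exp_neg_mul_sq hb).comp_sub_right c)
    (Eventually.of_forall fun _ => (exp_pos _).le),
    integral_sub_right_eq_self (fun x => exp (-(1 / (4 * l)) * x ^ 2)) c, integral_gaussian]
  congr 2
  field_simp

lemma lintegral_abs_deriv_mul_comp_le {ρ ρ' : ℝ → ℝ} (hρ : ∀ φ, HasDerivAt ρ (ρ' φ) φ)
    (hinj : Function.Injective ρ) (g : ℝ → ℝ≥0∞) :
    ∫⁻ φ, ENNReal.ofReal |ρ' φ| * g (ρ φ) ≤ ∫⁻ x, g x := by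
  have hchange := lintegral_image_eq_lintegral_abs_deriv_mul MeasurableSet.univ
    (fun φ _ => (hρ φ).hasDerivWithinAt) hinj.injOn g
  rw [Measure.restrict_univ] at hchange
  exact hchange ▸ setLIntegral_le_lintegral _ _

lemma exp_neg_norm_sub_sq_div_le {E : Type*} [SeminormedAddCommGroup E] (x y : E) {d : ℝ}
    (hd : 0 ≤ d) : exp (-‖x - y‖ ^ 2 / d) ≤ exp (-(‖x‖ - ‖y‖) ^ 2 / d) := by
  have hsq : (‖x‖ - ‖y‖) ^ 2 ≤ ‖x - y‖ ^ 2 :=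
    sq_le_sq.2 ((abs_norm_sub_norm_le x y).trans (le_abs_self _))
  exact exp_le_exp.2 (div_le_div_of_nonneg_right (neg_le_neg hsq) hd)

theorem gaussian_weighted_length_le {E : Type*} [NormedAddCommGroup E] [NormedSpace ℝ E]
    {γ : ℝ → E} {ρ ρ' : ℝ → ℝ} (hγρ : ∀ t, ‖γ t‖ = ρ t) (hρ : ∀ φ, HasDerivAt ρ (ρ' φ) φ)
    (hinj : Function.Injective ρ) {C : ℝ} (hC : ∀ φ, ‖deriv γ φ‖ ≤ C * |ρ' φ|)
    (x₀ : E) {l : ℝ} (hl : 0 < l) :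
    (ENNReal.ofReal √(4 * π * l))⁻¹ *
        ∫⁻ φ, ENNReal.ofReal (exp (-‖γ φ - x₀‖ ^ 2 / (4 * l)) * ‖deriv γ φ‖)
      ≤ ENNReal.ofReal C := by
  set G : ℝ → ℝ := fun x => exp (-(x - ‖x₀‖) ^ 2 / (4 * l))
  have hpointwise : ∀ φ, ENNReal.ofReal (exp (-‖γ φ - x₀‖ ^ 2 / (4 * l)) * ‖deriv γ φ‖)
      ≤ ENNReal.ofReal C * (ENNReal.ofReal |ρ' φ| * ENNReal.ofReal (G (ρ φ))) := fun φ => by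
    rw [← ENNReal.ofReal_mul (abs_nonneg _), ← ENNReal.ofReal_mul' (by positivity)]
    apply ENNReal.ofReal_le_ofReal
    calc exp (-‖γ φ - x₀‖ ^ 2 / (4 * l)) * ‖deriv γ φ‖ ≤ G (ρ φ) * (C * |ρ' φ|) :=
          mul_le_mul (hγρ φ ▸ exp_neg_norm_sub_sq_div_le _ _ (by positivity)) (hC φ)
            (norm_nonneg _) (exp_pos _).le
      _ = C * (|ρ' φ| * G (ρ φ)) := by ring
  rw [ENNReal.inv_mul_le_iff (by simp [hl, pi_pos]) ENNReal.ofReal_ne_top]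
  calc ∫⁻ φ, ENNReal.ofReal (exp (-‖γ φ - x₀‖ ^ 2 / (4 * l)) * ‖deriv γ φ‖)
      ≤ ∫⁻ φ, ENNReal.ofReal C * (ENNReal.ofReal |ρ' φ| * ENNReal.ofReal (G (ρ φ))) :=
        lintegral_mono hpointwise
    _ = ENNReal.ofReal C * ∫⁻ φ, ENNReal.ofReal |ρ' φ| * ENNReal.ofReal (G (ρ φ)) :=
        lintegral_const_mul' _ _ ENNReal.ofReal_ne_top
    _ ≤ ENNReal.ofReal C * ENNReal.ofReal √(4 * π * l) := by
        gcongr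
        rw [← lintegral_exp_neg_sq_sub_div ‖x₀‖ hl]
        exact lintegral_abs_deriv_mul_comp_le hρ hinj fun x => ENNReal.ofReal (G x)
    _ = ENNReal.ofReal √(4 * π * l) * ENNReal.ofReal C := mul_comm _ _

/-- The logarithmic spiral `γ(φ) = a e^{kφ}(cos φ, sin φ)` (`a > 0`,
`k ≠ 0`) has all Gaussian weighted lengths, hence entropy, at most
`√(1+k²)/|k| = 1/|sin (arctan k)|`. -/
theorem entropy_log_spiral_le
    (a k : ℝ) (ha : 0 < a) (hk : k ≠ 0)
    (γ : ℝ → R2)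
    (hγ : ∀ φ : ℝ, γ φ = toR2 (a * Real.exp (k * φ) * Real.cos φ)
                         (a * Real.exp (k * φ) * Real.sin φ)) :
    ∀ x₀ : R2, ∀ l : ℝ, 0 < l →
      (ENNReal.ofReal (Real.sqrt (4 * π * l)))⁻¹ *
        (∫⁻ φ : ℝ, ENNReal.ofReal
          (Real.exp (-‖γ φ - x₀‖ ^ 2 / (4 * l)) * ‖deriv γ φ‖))
      ≤ ENNReal.ofReal (Real.sqrt (1 + k ^ 2) / |k|) := by
  intro x₀ l hl
  set r : ℝ → ℝ := fun φ => a * exp (k * φ)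
  have hr_pos : ∀ φ, 0 < r φ := fun φ => by positivity
  have hr : ∀ φ, HasDerivAt r (k * r φ) φ := fun φ =>
    (((hasDerivAt_id φ).const_mul k).exp.const_mul a).congr_deriv (by simp only [r, id]; ring)
  have hr_inj : Function.Injective r := fun x y h => by simpa [r, ha.ne', hk] using h
  obtain rfl : γ = fun t => toR2 (r t * cos t) (r t * sin t) := funext hγ
  have hnorm (t : ℝ) : ‖toR2 (r t * cos t) (r t * sin t)‖ = r t := by
    rw [norm_toR2_polar, abs_of_pos (hr_pos t)]
  refine gaussian_weighted_length_le hnorm hr hr_inj (fun φ => le_of_eq ?_) x₀ hl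
  rw [norm_deriv_toR2_polar (hr φ), abs_mul, abs_of_pos (hr_pos φ),
    show (k * r φ) ^ 2 + r φ ^ 2 = (1 + k ^ 2) * r φ ^ 2 by ring,
    sqrt_mul (by positivity), sqrt_sq (hr_pos φ).le]
  field_simp
end
end
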